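/- arXiv:2302.13716 — 5 statements merged into one kernel-verified Lean document; each statement's English description precedes it below -/
import Mathlib

section
/- Let (X,d) be a δ-hyperbolic space with basepoint o that is upper Gromov bounded by above with constant M (i.e. for each x there exists a boundary point x̂ with (x̂, x)_o ≥ d(o,x) − M). For r > M + δ and any x ∈ X, the shadow O_r(o,x) = {ξ ∈ ∂X : (ξ,x)_o ≥ d(x,o) − r} satisfies B(x̂, e^{−ε(d(o,x)−r+δ)}) ⊆ O_r(o,x) ⊆ B(x̂, e^{−ε(d(x,o)−r−δ)}), where B denotes balls in the visual metric d_{o,ε}(ξ,η) = e^{−ε(ξ,η)_o}. -/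
/-- **Shadows vs visual balls.** In a δ-hyperbolic space `X` with basepoint `o`,
upper Gromov bounded by above with constant `M` (the boundary point `xhat`
satisfies `(x̂,x)_o ≥ d(o,x) − M`), for `r > M + δ` the shadow
`O_r(o,x) = {ξ ∈ ∂X : (ξ,x)_o ≥ d(x,o) − r}` is squeezed between the visual balls
`B(x̂, e^{−ε(d(o,x)−r+δ)})` and `B(x̂, e^{−ε(d(x,o)−r−δ)})`, where the visual
metric is `d_{o,ε}(ξ,η) = e^{−ε(ξ,η)_o}`. -/
theorem stmt_0 {X B : Type*} [MetricSpace X] (o : X) (δ ε M r : ℝ)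
    (hδ : 0 ≤ δ) (hε : 0 < ε) (hM : 0 < M) (hr : r > M + δ)
    -- extended Gromov products: `gpBX ξ x = (ξ,x)_o`, `gpBB ξ η = (ξ,η)_o`
    (gpBX : B → X → ℝ) (gpBB : B → B → ℝ)
    (hsym : ∀ ξ η : B, gpBB ξ η = gpBB η ξ)
    -- δ-hyperbolicity of the (extended) Gromov product
    (hyp1 : ∀ (ξ η : B) (x : X), gpBX ξ x ≥ min (gpBB ξ η) (gpBX η x) - δ)
    (hyp2 : ∀ (ξ η : B) (x : X), gpBB ξ η ≥ min (gpBX ξ x) (gpBX η x) - δ)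
    (x : X) (xhat : B) (hxhat : gpBX xhat x ≥ dist o x - M) :
    -- left inclusion: the ball of radius `e^{−ε(d(o,x)−r+δ)}` about `x̂` is in the shadow
    (∀ ξ : B, Real.exp (-(ε * gpBB xhat ξ)) < Real.exp (-(ε * (dist o x - r + δ))) →
      gpBX ξ x ≥ dist x o - r) ∧
    -- right inclusion: the shadow is inside the ball of radius `e^{−ε(d(x,o)−r−δ)}`
    (∀ ξ : B, gpBX ξ x ≥ dist x o - r →
      Real.exp (-(ε * gpBB xhat ξ)) ≤ Real.exp (-(ε * (dist x o - r - δ)))) := by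
  constructor
  · intro ξ hξ
    have h1 : -(ε * gpBB xhat ξ) < -(ε * (dist o x - r + δ)) := Real.exp_lt_exp.mp hξ
    have h2 : gpBB xhat ξ > dist o x - r + δ := by
      have := neg_lt_neg_iff.mp h1
      nlinarith
    have h3 := hyp1 ξ xhat x
    have h4 : gpBX xhat x ≥ dist o x - r + δ := by linarith
    rw [hsym] at h2
    have : min (gpBB ξ xhat) (gpBX xhat x) ≥ dist o x - r + δ :=
      le_min h2.le h4
    rw [dist_comm]
    linarith
  · intro ξ hξ
    have h3 := hyp2 xhat ξ x
    have h4 : gpBX xhat x ≥ dist x o - r := by rw [dist_comm]; linarith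
    have : min (gpBX xhat x) (gpBX ξ x) ≥ dist x o - r := le_min h4 hξ
    apply Real.exp_le_exp.mpr
    have : gpBB xhat ξ ≥ dist x o - r - δ := by linarith
    nlinarith
end

section
/- Let Γ be a non-elementary hyperbolic group acting properly discontinuously, cocompactly by isometries on a proper roughly geodesic δ-hyperbolic space X with basepoint o. For R > 0 large enough there exists r > 0 such that the shadows {O_r(o,γo) : γ ∈ S^Γ_{n,R}} cover ∂X for every n ∈ ℕ, where S^Γ_{n,R} = {γ ∈ Γ : nR ≤ d(o,γo) < (n+1)R}. -/
/-- **Covering the boundary by shadows.** Let `Γ` be a non-elementary hyperbolic group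
acting properly discontinuously, cocompactly by isometries on a proper roughly geodesic
δ-hyperbolic space `X` with basepoint `o`. For `R > 0` large enough there is `r > 0` such
that for every `n`, the shadows `O_r(o,γo)` with `γ ∈ S^Γ_{n,R}` cover the boundary `∂X`. -/
theorem stmt_2 {X B Γ : Type*} [MetricSpace X] [Group Γ] [MulAction Γ X]
    (o : X) (δ C_X κ : ℝ) (hδ : 0 ≤ δ) (hCX : 0 < C_X) (hκ : 0 < κ)
    -- extended Gromov product of a boundary point and a point of `X`, based at `o`
    (gpBX : B → X → ℝ)
    -- δ-hyperbolicity (mixed versions, interior Gromov products written explicitly)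
    (hyp1 : ∀ (ξ : B) (z y : X),
      gpBX ξ y ≥ min (gpBX ξ z) ((dist z o + dist y o - dist z y) / 2) - δ)
    (hyp2 : ∀ (ξ : B) (y z : X),
      (dist y o + dist z o - dist y z) / 2 ≥ min (gpBX ξ y) (gpBX ξ z) - δ)
    -- rough geodesity: every boundary point is represented by a rough geodesic ray from `o`
    (hray : ∀ ξ : B, ∃ c : ℝ → X,
      (∀ s : ℝ, 0 ≤ s → |dist o (c s) - s| ≤ C_X) ∧
      (∀ s : ℝ, 0 ≤ s → gpBX ξ (c s) ≥ s - C_X))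
    -- `Γ` acts by isometries, properly discontinuously and cocompactly,
    -- and is non-elementary (the boundary has more than two points)
    (hiso : ∀ (γ : Γ) (x y : X), dist (γ • x) (γ • y) = dist x y)
    (hproper : ∀ ρ : ℝ, {γ : Γ | dist (γ • o) o ≤ ρ}.Finite)
    (hcocompact : ∀ x : X, ∃ γ : Γ, dist (γ • o) x ≤ κ)
    (hnonelem : ∃ ξ₁ ξ₂ ξ₃ : B, ξ₁ ≠ ξ₂ ∧ ξ₁ ≠ ξ₃ ∧ ξ₂ ≠ ξ₃) :
    ∃ R₀ > (0 : ℝ), ∀ R ≥ R₀, ∃ r > (0 : ℝ), ∀ (n : ℕ) (ξ : B), ∃ γ : Γ,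
      ((n : ℝ) * R ≤ dist o (γ • o) ∧ dist o (γ • o) < ((n : ℝ) + 1) * R) ∧
      gpBX ξ (γ • o) ≥ dist (γ • o) o - r := by
  refine ⟨2 * (C_X + κ) + 1, by positivity, fun R hR => ⟨2 * C_X + κ + δ + 1, by positivity,
    fun n ξ => ?_⟩⟩
  have hR0 : (0 : ℝ) < R := by nlinarith
  obtain ⟨c, hc1, hc2⟩ := hray ξ
  set s : ℝ := (n : ℝ) * R + R / 2 with hs
  have hs0 : 0 ≤ s := by
    have : (0 : ℝ) ≤ (n : ℝ) * R := mul_nonneg (Nat.cast_nonneg n) hR0.le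
    simp only [hs]; linarith
  obtain ⟨γ, hγ⟩ := hcocompact (c s)
  have hb := hc1 s hs0
  have hg := hc2 s hs0
  rw [abs_le] at hb
  have ht1 : dist o (γ • o) ≤ dist o (c s) + dist (c s) (γ • o) := dist_triangle _ _ _
  have ht2 : dist o (c s) ≤ dist o (γ • o) + dist (γ • o) (c s) := dist_triangle _ _ _
  have hcom : dist (c s) (γ • o) = dist (γ • o) (c s) := dist_comm _ _
  have hupper : dist o (γ • o) ≤ s + C_X + κ := by linarith
  have hlower : s - C_X - κ ≤ dist o (γ • o) := by linarith
  refine ⟨γ, ⟨by simp only [hs] at hlower ⊢; linarith, by simp only [hs] at hupper ⊢; nlinarith⟩, ?_⟩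
  have h1 := hyp1 ξ (c s) (γ • o)
  have hdo : dist (γ • o) o = dist o (γ • o) := dist_comm _ _
  have hcso : dist (c s) o = dist o (c s) := dist_comm _ _
  have hcg : dist (c s) (γ • o) ≤ κ := by linarith
  have hmin : dist o (γ • o) - (2 * C_X + κ + δ + 1) + δ ≤
      min (gpBX ξ (c s)) ((dist (c s) o + dist (γ • o) o - dist (c s) (γ • o)) / 2) := by
    refine le_min (by linarith) ?_
    rw [hcso, hdo]
    linarith
  linarith [h1]
end

section
/- Under the same setting, for all R, r > 0 large enough there exists an integer m such that for all ξ ∈ ∂X and all n ∈ ℕ, the number of γ ∈ S^Γ_{n,R} with ξ ∈ O_r(o,γo) is at most m (finite multiplicity of the shadow covering). -/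
/-- **Finite multiplicity of the shadow covering.** In the same setting, for all `R, r > 0`
large enough there is `m ∈ ℕ` such that for every boundary point `ξ` and every `n`,
at most `m` of the shadows `O_r(o,γo)`, `γ ∈ S^Γ_{n,R}`, contain `ξ`. -/
theorem stmt_3 {X B Γ : Type*} [MetricSpace X] [Group Γ] [MulAction Γ X]
    (o : X) (δ C_X κ : ℝ) (hδ : 0 ≤ δ) (hCX : 0 < C_X) (hκ : 0 < κ)
    (gpBX : B → X → ℝ)
    (hyp1 : ∀ (ξ : B) (z y : X),
      gpBX ξ y ≥ min (gpBX ξ z) ((dist z o + dist y o - dist z y) / 2) - δ)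
    (hyp2 : ∀ (ξ : B) (y z : X),
      (dist y o + dist z o - dist y z) / 2 ≥ min (gpBX ξ y) (gpBX ξ z) - δ)
    (hray : ∀ ξ : B, ∃ c : ℝ → X,
      (∀ s : ℝ, 0 ≤ s → |dist o (c s) - s| ≤ C_X) ∧
      (∀ s : ℝ, 0 ≤ s → gpBX ξ (c s) ≥ s - C_X))
    (hiso : ∀ (γ : Γ) (x y : X), dist (γ • x) (γ • y) = dist x y)
    (hproper : ∀ ρ : ℝ, {γ : Γ | dist (γ • o) o ≤ ρ}.Finite)
    (hcocompact : ∀ x : X, ∃ γ : Γ, dist (γ • o) x ≤ κ)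
    (hnonelem : ∃ ξ₁ ξ₂ ξ₃ : B, ξ₁ ≠ ξ₂ ∧ ξ₁ ≠ ξ₃ ∧ ξ₂ ≠ ξ₃) :
    ∃ R₀ > (0 : ℝ), ∃ r₀ > (0 : ℝ), ∀ R ≥ R₀, ∀ r ≥ r₀, ∃ m : ℕ,
      ∀ (ξ : B) (n : ℕ),
        {γ : Γ | ((n : ℝ) * R ≤ dist o (γ • o) ∧ dist o (γ • o) < ((n : ℝ) + 1) * R) ∧
            gpBX ξ (γ • o) ≥ dist (γ • o) o - r}.Finite ∧
        {γ : Γ | ((n : ℝ) * R ≤ dist o (γ • o) ∧ dist o (γ • o) < ((n : ℝ) + 1) * R) ∧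
            gpBX ξ (γ • o) ≥ dist (γ • o) o - r}.ncard ≤ m := by
  refine ⟨1, one_pos, 1, one_pos, fun R hR r hr => ?_⟩
  set ρ : ℝ := 2 * R + 2 * r + 2 * δ with hρdef
  set Bρ : Set Γ := {γ : Γ | dist (γ • o) o ≤ ρ} with hBdef
  have hBfin : Bρ.Finite := hproper ρ
  refine ⟨Bρ.ncard, fun ξ n => ?_⟩
  set S : Set Γ := {γ : Γ | ((n : ℝ) * R ≤ dist o (γ • o) ∧ dist o (γ • o) < ((n : ℝ) + 1) * R) ∧
      gpBX ξ (γ • o) ≥ dist (γ • o) o - r} with hSdef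
  rcases S.eq_empty_or_nonempty with hS | ⟨γ₀, hγ₀⟩
  · simp [hS]
  have hsub : S ⊆ (fun g => γ₀ * g) '' Bρ := by
    intro γ hγ
    refine ⟨γ₀⁻¹ * γ, ?_, by group⟩
    have h1 : dist ((γ₀⁻¹ * γ) • o) o = dist (γ • o) (γ₀ • o) := by
      rw [← hiso γ₀ ((γ₀⁻¹ * γ) • o) o, ← mul_smul]
      group
    have h2 := hyp2 ξ (γ • o) (γ₀ • o)
    have hγd := hγ.2
    have hγ₀d := hγ₀.2
    have hγlo : (n : ℝ) * R ≤ dist (γ • o) o := by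
      rw [dist_comm]; exact hγ.1.1
    have hγ₀lo : (n : ℝ) * R ≤ dist (γ₀ • o) o := by
      rw [dist_comm]; exact hγ₀.1.1
    have hγhi : dist (γ • o) o < ((n : ℝ) + 1) * R := by
      rw [dist_comm]; exact hγ.1.2
    have hγ₀hi : dist (γ₀ • o) o < ((n : ℝ) + 1) * R := by
      rw [dist_comm]; exact hγ₀.1.2
    have hmin : min (gpBX ξ (γ • o)) (gpBX ξ (γ₀ • o)) ≥ (n : ℝ) * R - r := by
      rcases min_cases (gpBX ξ (γ • o)) (gpBX ξ (γ₀ • o)) with ⟨h, _⟩ | ⟨h, _⟩ <;>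
        rw [h] <;> linarith
    show dist ((γ₀⁻¹ * γ) • o) o ≤ ρ
    rw [h1, hρdef]
    nlinarith [h2, hmin]
  have hSfin : S.Finite := (hBfin.image _).subset hsub
  refine ⟨hSfin, ?_⟩
  calc S.ncard ≤ ((fun g => γ₀ * g) '' Bρ).ncard :=
        Set.ncard_le_ncard hsub (hBfin.image _)
    _ = Bρ.ncard := Set.ncard_image_of_injective _ (mul_right_injective γ₀)
end

section
/- Under the same setting, for R > 0 large enough there exists C > 0 such that for every ξ ∈ ∂X and every n ∈ ℕ there exists g_ξ ∈ S^Γ_{n,R} with β_ξ(o, γo) ≤ β_{γ̂_o}(o, g_ξ o) + C for all γ ∈ S^Γ_{n,R}, where β denotes the Busemann function and γ̂_o is a boundary point with (γ̂_o, γo)_o ≥ d(o,γo) − M. -/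
/-- **Comparison of Busemann functions on spheres.** In the same setting, for `R` large
enough there is `C > 0` such that for every `ξ ∈ ∂X` and every `n` there exists
`g_ξ ∈ S^Γ_{n,R}` with `β_ξ(o, γo) ≤ β_{γ̂_o}(o, g_ξ o) + C` for all `γ ∈ S^Γ_{n,R}`;
here `β ξ y = β_ξ(o,y) = −d(o,y) + 2(ξ,y)_o` is the Busemann function and `γ̂_o = hat γ`
is a boundary point with `(γ̂_o, γo)_o ≥ d(o,γo) − M`. -/
theorem stmt_4 {X B Γ : Type*} [MetricSpace X] [Group Γ] [MulAction Γ X]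
    (o : X) (δ C_X κ M : ℝ) (hδ : 0 ≤ δ) (hCX : 0 < C_X) (hκ : 0 < κ) (hM : 0 < M)
    (gpBX : B → X → ℝ)
    (hyp1 : ∀ (ξ : B) (z y : X),
      gpBX ξ y ≥ min (gpBX ξ z) ((dist z o + dist y o - dist z y) / 2) - δ)
    (hyp2 : ∀ (ξ : B) (y z : X),
      (dist y o + dist z o - dist y z) / 2 ≥ min (gpBX ξ y) (gpBX ξ z) - δ)
    -- the Gromov product is bounded by, and `1`-Lipschitz in, the distance
    (hbound : ∀ (ξ : B) (z : X), gpBX ξ z ≤ dist o z)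
    (hlip : ∀ (ξ : B) (y z : X), |gpBX ξ y - gpBX ξ z| ≤ dist y z)
    (hray : ∀ ξ : B, ∃ c : ℝ → X,
      (∀ s : ℝ, 0 ≤ s → |dist o (c s) - s| ≤ C_X) ∧
      (∀ s : ℝ, 0 ≤ s → gpBX ξ (c s) ≥ s - C_X))
    (hiso : ∀ (γ : Γ) (x y : X), dist (γ • x) (γ • y) = dist x y)
    (hproper : ∀ ρ : ℝ, {γ : Γ | dist (γ • o) o ≤ ρ}.Finite)
    (hcocompact : ∀ x : X, ∃ γ : Γ, dist (γ • o) x ≤ κ)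
    (hnonelem : ∃ ξ₁ ξ₂ ξ₃ : B, ξ₁ ≠ ξ₂ ∧ ξ₁ ≠ ξ₃ ∧ ξ₂ ≠ ξ₃)
    -- Busemann function `β ξ y = β_ξ(o,y)`
    (β : B → X → ℝ) (hβ : ∀ (ξ : B) (y : X), β ξ y = -(dist o y) + 2 * gpBX ξ y)
    -- upper-Gromov choice of endpoint `γ̂_o` for each `γ`
    (hat : Γ → B) (hhat : ∀ γ : Γ, gpBX (hat γ) (γ • o) ≥ dist o (γ • o) - M) :
    ∃ R₀ > (0 : ℝ), ∀ R ≥ R₀, ∃ C > (0 : ℝ), ∀ (n : ℕ) (ξ : B), ∃ g : Γ,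
      ((n : ℝ) * R ≤ dist o (g • o) ∧ dist o (g • o) < ((n : ℝ) + 1) * R) ∧
      ∀ γ : Γ, (n : ℝ) * R ≤ dist o (γ • o) → dist o (γ • o) < ((n : ℝ) + 1) * R →
        β ξ (γ • o) ≤ β (hat γ) (g • o) + C := by
  refine ⟨2 * (C_X + κ) + 1, by linarith, fun R hR => ?_⟩
  have hR0 : 0 < R := by linarith
  refine ⟨2 * (C_X + κ) + 2 * R + 2 * M + 4 * δ, by linarith, fun n ξ => ?_⟩
  obtain ⟨c, hc1, hc2⟩ := hray ξ
  set s : ℝ := (n : ℝ) * R + C_X + κ with hs_def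
  have hnR : (0 : ℝ) ≤ (n : ℝ) * R := mul_nonneg (Nat.cast_nonneg n) hR0.le
  have hs : 0 ≤ s := by simp only [hs_def]; linarith
  obtain ⟨g, hg⟩ := hcocompact (c s)
  have hcs := abs_le.mp (hc1 s hs)
  have hgp := abs_le.mp (hlip ξ (g • o) (c s))
  -- distance bounds for g • o
  have ht1 : dist o (g • o) ≤ dist o (c s) + dist (g • o) (c s) := by
    rw [dist_comm (g • o) (c s)]; exact dist_triangle _ _ _
  have ht2 : dist o (c s) ≤ dist o (g • o) + dist (g • o) (c s) := by
    rw [dist_comm (g • o) (c s)]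
    calc dist o (c s) ≤ dist o (g • o) + dist (g • o) (c s) := dist_triangle _ _ _
    _ = _ := by rw [dist_comm (g • o) (c s)]
  have hd_lo : (n : ℝ) * R ≤ dist o (g • o) := by simp only [hs_def] at hcs ⊢; linarith
  have hd_hi : dist o (g • o) ≤ (n : ℝ) * R + 2 * (C_X + κ) := by
    simp only [hs_def] at hcs ⊢; linarith
  have hgpg : gpBX ξ (g • o) ≥ (n : ℝ) * R := by
    have := hc2 s hs
    simp only [hs_def] at this ⊢
    linarith [hgp.1, hgp.2]
  refine ⟨g, ⟨hd_lo, by linarith⟩, fun γ hγ1 hγ2 => ?_⟩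
  set a : ℝ := gpBX ξ (γ • o) with ha_def
  have hab : a ≤ dist o (γ • o) := hbound ξ (γ • o)
  -- Gromov product of γo and go
  have hP := hyp2 ξ (γ • o) (g • o)
  have hminξ : a - R ≤ min (gpBX ξ (γ • o)) (gpBX ξ (g • o)) := by
    refine le_min (by linarith) ?_
    have : a < (n : ℝ) * R + R := by nlinarith
    linarith
  have hP' : (dist (γ • o) o + dist (g • o) o - dist (γ • o) (g • o)) / 2 ≥ a - R - δ := by
    linarith
  have hmain := hyp1 (hat γ) (γ • o) (g • o)
  have hhatγ := hhat γ
  have hmin2 : a - R - M - δ ≤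
      min (gpBX (hat γ) (γ • o)) ((dist (γ • o) o + dist (g • o) o - dist (γ • o) (g • o)) / 2) := by
    refine le_min ?_ (by linarith)
    have : a < (n : ℝ) * R + R := by nlinarith
    linarith
  have hfin : gpBX (hat γ) (g • o) ≥ a - R - M - 2 * δ := by linarith
  rw [hβ, hβ]
  have hdg : dist o (g • o) = dist (g • o) o := dist_comm _ _
  linarith
end

section
/- Intertwining relation: for 0 < t < 1/2, the operator (I_t v)(ξ) = ∫ v(η) d_{o,ε}(ξ,η)^{−(1−2t)D} dν_o(η) satisfies I_t ∘ π_t(γ) = π_{−t}(γ) ∘ I_t for all γ ∈ Γ and all v ∈ L^p(∂X, ν_o) with 1/p = 1/2 + t, provided the visual metrics satisfy the conformal relation d_{γo,ε}(ξ,η) = e^{(ε/2)(β_ξ(o,γo)+β_η(o,γo))} d_{o,ε}(ξ,η) and the Radon–Nikodym derivative of γ_*ν_o is e^{Q β_ξ(o,γo)}. -/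
open MeasureTheory

/-!
Substitute `η ↦ γ • η` in the left-hand integral. The Radon–Nikodym factor
`e^{-Q β_γ(γη)}` of the substitution, the factor `e^{(1/2+t) Q β_γ(γη)}` of `π_t(γ)`, and
the factor `e^{(1/2-t) Q (β_γ(ξ) + β_γ(γη))}` produced by the conformal relation raised to the power
`-(1-2t)D = -(1-2t)Q/ε` multiply to `e^{(1/2-t) Q β_γ(ξ)}`: the `η`-dependence cancels exactly.
-/

section Cocycle

variable {Γ Ω : Type*} [Group Γ] [MulAction Γ Ω] {β : Γ → Ω → ℝ}

theorem cocycle_one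
    (hcoc : ∀ (γ₁ γ₂ : Γ) (ξ : Ω), β (γ₁ * γ₂) ξ = β γ₁ ξ + β γ₂ (γ₁⁻¹ • ξ)) (ξ : Ω) :
    β 1 ξ = 0 := by
  have h := hcoc 1 1 ξ
  rw [mul_one, inv_one, one_smul] at h
  linarith

theorem cocycle_inv
    (hcoc : ∀ (γ₁ γ₂ : Γ) (ξ : Ω), β (γ₁ * γ₂) ξ = β γ₁ ξ + β γ₂ (γ₁⁻¹ • ξ)) (γ : Γ)
    (ξ : Ω) : β γ⁻¹ ξ = -β γ (γ • ξ) := by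
  have h := hcoc γ γ⁻¹ (γ • ξ)
  rw [mul_inv_cancel, cocycle_one hcoc, inv_smul_smul] at h
  linarith

end Cocycle

theorem integral_comp_eq_integral_smul_of_map_eq_withDensity {α β E : Type*}
    [MeasurableSpace α] [MeasurableSpace β] [NormedAddCommGroup E] [NormedSpace ℝ E]
    {ν : Measure α} {μ : Measure β} {g : α → β} {ρ : β → ℝ} {f : β → E}
    (hg : Measurable g) (hρ : Measurable ρ) (hρ_nonneg : ∀ y, 0 ≤ ρ y)
    (hmap : ν.map g = μ.withDensity fun y => ENNReal.ofReal (ρ y))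
    (hf : AEStronglyMeasurable f (ν.map g)) :
    ∫ x, f (g x) ∂ν = ∫ y, ρ y • f y ∂μ := by
  rw [← integral_map hg.aemeasurable hf, hmap,
    integral_withDensity_eq_integral_toReal_smul hρ.ennreal_ofReal
      (ae_of_all _ fun _ => ENNReal.ofReal_lt_top)]
  simp only [ENNReal.toReal_ofReal (hρ_nonneg _)]

theorem rpow_neg_eq_exp_mul_rpow_neg_of_conformal {ε Q t a d d' : ℝ} (hε : ε ≠ 0)
    (hd : 0 ≤ d) (hconf : d' = Real.exp (ε / 2 * a) * d) :
    d ^ (-((1 - 2 * t) * (Q / ε)))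
      = Real.exp ((1 / 2 - t) * Q * a) * d' ^ (-((1 - 2 * t) * (Q / ε))) := by
  have hexp : ε / 2 * a * -((1 - 2 * t) * (Q / ε)) = -((1 / 2 - t) * Q * a) := by
    field_simp
  rw [hconf, Real.mul_rpow (Real.exp_pos _).le hd, ← Real.exp_mul, hexp, ← mul_assoc,
    ← Real.exp_add, add_neg_cancel, Real.exp_zero, one_mul]

theorem stmt_11_general {Γ Ω : Type*} [Group Γ] [MulAction Γ Ω] [MeasurableSpace Ω]
    (ν : Measure Ω)
    (hsmul : ∀ γ : Γ, Measurable fun ξ : Ω => γ • ξ)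
    (Q ε D t p : ℝ) (hε : 0 < ε) (hD : D = Q / ε)
    (β : Γ → Ω → ℝ) (hβmeas : ∀ γ : Γ, Measurable (β γ))
    (hcoc : ∀ (γ₁ γ₂ : Γ) (ξ : Ω), β (γ₁ * γ₂) ξ = β γ₁ ξ + β γ₂ (γ₁⁻¹ • ξ))
    (hRN : ∀ γ : Γ, Measure.map (fun ξ : Ω => γ • ξ) ν =
      ν.withDensity fun ξ => ENNReal.ofReal (Real.exp (Q * β γ ξ)))
    -- the visual metric `d_{o,ε}` on the boundary and the conformal relation
    (dvo : Ω → Ω → ℝ) (hdmeas : Measurable (Function.uncurry dvo))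
    (hdnonneg : ∀ ξ η : Ω, 0 ≤ dvo ξ η)
    (hconf : ∀ (γ : Γ) (ξ η : Ω),
      dvo (γ⁻¹ • ξ) (γ⁻¹ • η) = Real.exp (ε / 2 * (β γ ξ + β γ η)) * dvo ξ η) :
    -- `I_t (π_t(γ) v) = π_{−t}(γ) (I_t v)`
    ∀ (γ : Γ) (v : Ω → ℝ), Measurable v → MemLp v (ENNReal.ofReal p) ν →
      ∀ ξ : Ω,
        ∫ η, (Real.exp ((1 / 2 + t) * Q * β γ η) * v (γ⁻¹ • η)) *
            dvo ξ η ^ (-((1 - 2 * t) * D)) ∂ν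
          = Real.exp ((1 / 2 - t) * Q * β γ ξ) *
            ∫ η, v η * dvo (γ⁻¹ • ξ) η ^ (-((1 - 2 * t) * D)) ∂ν := by
  intro γ v hv _ ξ
  subst hD
  have hintegrand : Measurable fun η => (Real.exp ((1 / 2 + t) * Q * β γ η) * v (γ⁻¹ • η)) *
      dvo ξ η ^ (-((1 - 2 * t) * (Q / ε))) :=
    (((hβmeas γ).const_mul _).exp.mul (hv.comp (hsmul γ⁻¹))).mul
      ((hdmeas.comp measurable_prodMk_left).pow_const _)
  have hsubst := integral_comp_eq_integral_smul_of_map_eq_withDensity (hsmul γ⁻¹)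
    ((hβmeas γ⁻¹).const_mul Q).exp (fun _ => (Real.exp_pos _).le) (hRN γ⁻¹)
    (hintegrand.comp (hsmul γ)).aestronglyMeasurable
  simp only [Function.comp_apply, smul_inv_smul] at hsubst
  rw [hsubst, ← integral_const_mul]
  refine integral_congr_ae (ae_of_all _ fun η => ?_)
  have hkernel := rpow_neg_eq_exp_mul_rpow_neg_of_conformal (t := t) (Q := Q) hε.ne'
    (hdnonneg ξ (γ • η)) (by simpa only [inv_smul_smul] using hconf γ ξ (γ • η))
  dsimp only
  rw [smul_eq_mul, inv_smul_smul, cocycle_inv hcoc, hkernel]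
  set b := β γ (γ • η)
  set K := dvo (γ⁻¹ • ξ) η ^ (-((1 - 2 * t) * (Q / ε)))
  calc Real.exp (Q * -b) * (Real.exp ((1 / 2 + t) * Q * b) * v η *
        (Real.exp ((1 / 2 - t) * Q * (β γ ξ + b)) * K))
      = Real.exp (Q * -b + (1 / 2 + t) * Q * b + (1 / 2 - t) * Q * (β γ ξ + b)) * (v η * K) := by
        rw [Real.exp_add, Real.exp_add]; ring
    _ = Real.exp ((1 / 2 - t) * Q * β γ ξ) * (v η * K) := by ring_nf

/-- **The intertwining relation `I_t π_t(γ) = π_{−t}(γ) I_t`.** For `0 < t < 1/2`, the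
operator `(I_t v)(ξ) = ∫ v(η) d_{o,ε}(ξ,η)^{−(1−2t)D} dν(η)` intertwines `π_t` and
`π_{−t}`, provided the visual metrics satisfy the conformal relation
`d_{o,ε}(γ⁻¹ξ, γ⁻¹η) = e^{(ε/2)(β_ξ(o,γo)+β_η(o,γo))} d_{o,ε}(ξ,η)` and
`dγ_*ν/dν(ξ) = e^{Q β_ξ(o,γo)}`, with `D = Q/ε`. -/
theorem stmt_11 {Γ Ω : Type*} [Group Γ] [MulAction Γ Ω] [MeasurableSpace Ω]
    (ν : Measure Ω) [IsProbabilityMeasure ν]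
    (hsmul : ∀ γ : Γ, Measurable fun ξ : Ω => γ • ξ)
    (Q ε D t p : ℝ) (hQ : 0 < Q) (hε : 0 < ε) (hD : D = Q / ε)
    (ht : 0 < t) (ht' : t < 1 / 2) (hp : 1 / p = 1 / 2 + t)
    (β : Γ → Ω → ℝ) (hβmeas : ∀ γ : Γ, Measurable (β γ))
    (hcoc : ∀ (γ₁ γ₂ : Γ) (ξ : Ω), β (γ₁ * γ₂) ξ = β γ₁ ξ + β γ₂ (γ₁⁻¹ • ξ))
    (hRN : ∀ γ : Γ, Measure.map (fun ξ : Ω => γ • ξ) ν =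
      ν.withDensity fun ξ => ENNReal.ofReal (Real.exp (Q * β γ ξ)))
    -- the visual metric `d_{o,ε}` on the boundary and the conformal relation
    (dvo : Ω → Ω → ℝ) (hdmeas : Measurable (Function.uncurry dvo))
    (hdnonneg : ∀ ξ η : Ω, 0 ≤ dvo ξ η)
    (hconf : ∀ (γ : Γ) (ξ η : Ω),
      dvo (γ⁻¹ • ξ) (γ⁻¹ • η) = Real.exp (ε / 2 * (β γ ξ + β γ η)) * dvo ξ η) :
    -- `I_t (π_t(γ) v) = π_{−t}(γ) (I_t v)`
    ∀ (γ : Γ) (v : Ω → ℝ), Measurable v → MemLp v (ENNReal.ofReal p) ν →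
      ∀ ξ : Ω,
        ∫ η, (Real.exp ((1 / 2 + t) * Q * β γ η) * v (γ⁻¹ • η)) *
            dvo ξ η ^ (-((1 - 2 * t) * D)) ∂ν
          = Real.exp ((1 / 2 - t) * Q * β γ ξ) *
            ∫ η, v η * dvo (γ⁻¹ • ξ) η ^ (-((1 - 2 * t) * D)) ∂ν :=
  stmt_11_general ν hsmul Q ε D t p hε hD β hβmeas hcoc hRN dvo hdmeas hdnonneg hconf
end
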